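/- Let w : Fin (n+1) → ℤ and c ∈ ℤ. Let Y = { [x] ∈ ℙⁿ(ℂ) | (for all i, x i ≠ 0 implies w i ≥ c) and (there exists i with x i ≠ 0 and w i = c) } and Z = { [x] ∈ ℙⁿ(ℂ) | for all i, x i ≠ 0 implies w i = c }. Then for every nonzero x : Fin (n+1) → ℂ with [x] ∈ Y: (a) the map sending nonzero t ∈ ℂ to the class of (fun i => t ^ (w i) * x i) tends, as t → 0 within ℂ \ {0}, to the class of the nonzero vector y defined by y i = x i if w i = c and y i = 0 otherwise; (b) the class [y] lies in Z; and (c) if [x] ∈ Z then [y] = [x]. Consequently the limit map p : Y → Z is a well-defined surjective retraction of Y onto Z. (There is a natural surjective retraction p_β : Y_β → Z_β given by taking the limit as t → 0 under the one-parameter subgroup λ_β.) -/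

import Mathlib

open scoped LinearAlgebra.Projectivization RealInnerProductSpace

/-- The quotient topology on the projectivization of `Fin (n+1) → ℂ`. -/
noncomputable instance projTop {n : ℕ} : TopologicalSpace (ℙ ℂ (Fin (n + 1) → ℂ)) :=
  inferInstanceAs (TopologicalSpace (Quotient (projectivizationSetoid ℂ (Fin (n + 1) → ℂ))))

/-- For `t ≠ 0` and `x ≠ 0`, the coordinate-wise scaled vector `i ↦ t ^ (w i) * x i`
is nonzero. -/
theorem scale_ne_zero {n : ℕ} (w : Fin (n + 1) → ℤ) {x : Fin (n + 1) → ℂ} (hx : x ≠ 0)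
    {t : ℂ} (ht : t ≠ 0) : (fun i => t ^ (w i) * x i) ≠ 0 := by
  obtain ⟨i, hi⟩ := Function.ne_iff.mp hx
  intro h
  have h2 := congrFun h i
  simp only [Pi.zero_apply, mul_eq_zero] at h2
  rcases h2 with h2 | h2
  · exact absurd h2 (zpow_ne_zero _ ht)
  · exact hi (by simpa using h2)

/-!
The limit is computed after dividing by `t ^ c`, which does not change the class in projective
space: the rescaled coordinates are `t ^ (w i - c) * x i`, constant where `w i = c` and tending
to `0` elsewhere on the support, because there `w i > c`. The limit vector is nonzero since some
support weight equals `c`, and the projection to projective space is continuous on the nonzero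
vectors.
-/

open Filter Topology

theorem tendsto_zpow_nhdsNE_zero {𝕜 : Type*} [NontriviallyNormedField 𝕜] {k : ℤ} (hk : 0 < k) :
    Tendsto (fun t : 𝕜 => t ^ k) (𝓝[≠] 0) (𝓝 0) := by
  have h := (continuousAt_zpow₀ (0 : 𝕜) k (Or.inr hk.le)).tendsto.mono_left
    (nhdsWithin_le_nhds (s := {0}ᶜ))
  rwa [zero_zpow k hk.ne'] at h

theorem tendsto_zpow_sub_mul_nhdsNE_zero {𝕜 ι : Type*} [NontriviallyNormedField 𝕜]
    {w : ι → ℤ} {c : ℤ} {x : ι → 𝕜} (hxw : ∀ i, x i ≠ 0 → c ≤ w i) :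
    Tendsto (fun t : 𝕜 => fun i => t ^ (w i - c) * x i) (𝓝[≠] 0)
      (𝓝 fun i => if w i = c then x i else 0) := by
  refine tendsto_pi_nhds.mpr fun i => ?_
  by_cases hwi : w i = c
  · simp [hwi]
  by_cases hxi : x i = 0
  · simp [hwi, hxi]
  have hlt : 0 < w i - c := sub_pos.mpr ((hxw i hxi).lt_of_ne' hwi)
  simpa [hwi] using (tendsto_zpow_nhdsNE_zero hlt).mul_const (x i)

theorem Projectivization.mk_zpow_mul_eq_mk_zpow_sub_mul {K ι : Type*} [Field K]
    (w : ι → ℤ) (c : ℤ) (x : ι → K) {t : K} (ht : t ≠ 0)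
    (h₁ : (fun i => t ^ w i * x i) ≠ 0) (h₂ : (fun i => t ^ (w i - c) * x i) ≠ 0) :
    mk K (fun i => t ^ w i * x i) h₁ = mk K (fun i => t ^ (w i - c) * x i) h₂ := by
  refine (mk_eq_mk_iff' K _ _ h₁ h₂).mpr ⟨t ^ c, funext fun i => ?_⟩
  simp only [Pi.smul_apply, smul_eq_mul, ← mul_assoc, ← zpow_add₀ ht, add_sub_cancel]

theorem Projectivization.continuousOn_mk {n : ℕ} {v : Fin (n + 1) → ℂ} (hv : v ≠ 0) :
    ContinuousOn (fun u => if h : u = 0 then mk ℂ v hv else mk ℂ u h) {u | u ≠ 0} := by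
  rw [continuousOn_iff_continuous_domRestrict]
  have hmk : Continuous fun u : {u : Fin (n + 1) → ℂ | u ≠ 0} => mk ℂ u.1 u.2 :=
    continuous_quotient_mk'
  exact hmk.congr fun u => (dif_neg u.2).symm

theorem Projectivization.tendsto_mk {α : Type*} {n : ℕ} {l : Filter α}
    {f : α → ℙ ℂ (Fin (n + 1) → ℂ)} {g : α → Fin (n + 1) → ℂ} {v : Fin (n + 1) → ℂ}
    (hv : v ≠ 0) (hg : Tendsto g l (𝓝 v)) (hfg : ∀ᶠ a in l, ∀ h : g a ≠ 0, f a = mk ℂ (g a) h) :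
    Tendsto f l (𝓝 (mk ℂ v hv)) := by
  have hcont := (continuousOn_mk hv).continuousAt (isOpen_ne.mem_nhds hv)
  have hlim := hcont.tendsto.comp hg
  simp only [hv, dite_false] at hlim
  refine hlim.congr' ?_
  filter_upwards [hfg, hg.eventually (isOpen_ne.mem_nhds hv)] with a hfa hga
  simp [hga, hfa hga]

/-- **The retraction `p_β : Y_β → Z_β`**: let `w` be the weight vector of the
one-parameter subgroup `λ_β` and `c` the level of the hyperplane `H_β`. For every
nonzero `x` whose class lies in `Y` (all support weights `≥ c`, at least one `= c`),
setting `y i = x i` when `w i = c` and `y i = 0` otherwise: (a) the class of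
`i ↦ t ^ (w i) * x i` tends to the class of the nonzero vector `y` as `t → 0` in
`ℂ \ {0}`; (b) the class of `y` lies in `Z` (all support weights `= c`); and (c) if the
class of `x` already lies in `Z` then `[y] = [x]`. Hence the limit map is a well-defined
surjective retraction of `Y` onto `Z`. -/
theorem stmt_10 {n : ℕ} (w : Fin (n + 1) → ℤ) (c : ℤ)
    (x : Fin (n + 1) → ℂ) (hx : x ≠ 0)
    (hY1 : ∀ i, x i ≠ 0 → c ≤ w i) (hY2 : ∃ i, x i ≠ 0 ∧ w i = c)
    (y : Fin (n + 1) → ℂ) (hy : y = fun i => if w i = c then x i else 0)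
    (f : ℂ → ℙ ℂ (Fin (n + 1) → ℂ))
    (hf : ∀ (t : ℂ) (ht : t ≠ 0),
      f t = Projectivization.mk ℂ (fun i => t ^ (w i) * x i) (scale_ne_zero w hx ht)) :
    ∃ hy0 : y ≠ 0,
      Filter.Tendsto f (nhdsWithin 0 {0}ᶜ) (nhds (Projectivization.mk ℂ y hy0)) ∧
        (∀ i, y i ≠ 0 → w i = c) ∧
        ((∀ i, x i ≠ 0 → w i = c) →
          Projectivization.mk ℂ y hy0 = Projectivization.mk ℂ x hx) := by
  subst hy
  obtain ⟨i₀, hxi₀, hwi₀⟩ := hY2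
  have hy0 : (fun i => if w i = c then x i else 0) ≠ 0 :=
    Function.ne_iff.mpr ⟨i₀, by simpa [hwi₀] using hxi₀⟩
  refine ⟨hy0, ?_, fun i hi => by_contra fun hwi => hi (if_neg hwi), fun hZ => ?_⟩
  · refine Projectivization.tendsto_mk hy0 (tendsto_zpow_sub_mul_nhdsNE_zero hY1) ?_
    filter_upwards [self_mem_nhdsWithin] with t ht h
    rw [hf t ht]
    exact Projectivization.mk_zpow_mul_eq_mk_zpow_sub_mul w c x ht _ h
  · congr 1
    funext i
    by_cases hxi : x i = 0 <;> simp [hxi, hZ i]
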